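/- (Specific energy identity, divergent case.) Let u ∈ 𝒰 and let ρ : ℝᵈ × ℝᵈ → [0,∞) be measurable, bounded by a constant ξ > 0, and translation invariant (ρ(x+z,y+z) = ρ(x,y) for all x,y,z). Assume that ∫_{ℝᵈ} max(u(y),0) ρ(y,0) dy = +∞. Then for every sufficiently large ℓ the extended-valued double integral ∫_{Λ_ℓ × Λ_ℓ} u(x−y) ρ(x,y) d(x,y), defined as ∫ max(u(x−y),0)ρ(x,y) − ∫ max(−u(x−y),0)ρ(x,y) (the second integral being finite), equals +∞; in particular lim_{ℓ→∞} (1/|Λ_ℓ|) ∫_{Λ_ℓ × Λ_ℓ} u(x−y) ρ(x,y) d(x,y) = +∞. -/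

import Mathlib

open MeasureTheory ENNReal Filter

/-- The box `Λ_ℓ = [-ℓ,ℓ]^d ⊂ ℝᵈ`. -/
def lam (d : ℕ) (ℓ : ℝ) : Set (EuclideanSpace ℝ (Fin d)) := {x | ∀ i, |x i| ≤ ℓ}

/-- The class 𝒰 of pair potentials: even measurable functions `u : ℝᵈ → ℝ ∪ {+∞}`
with a decreasing, non-integrable lower bound `φ` near the origin and a decreasing,
integrable majorant `ψ` of `|u|` away from the origin. -/
def memU (d : ℕ) (u : EuclideanSpace ℝ (Fin d) → EReal) : Prop :=
  Measurable u ∧ (∀ x, u (-x) = u x) ∧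
  ∃ r₀ : ℝ, 0 < r₀ ∧
    (∃ φ : ℝ → ℝ,
      (∀ r ∈ Set.Ioc (0 : ℝ) r₀, 0 ≤ φ r) ∧
      AntitoneOn φ (Set.Ioc 0 r₀) ∧
      (∫⁻ r in Set.Ioc (0 : ℝ) r₀, ENNReal.ofReal (r ^ (d - 1) * φ r)) = ⊤ ∧
      (∀ x : EuclideanSpace ℝ (Fin d), 0 < ‖x‖ → ‖x‖ ≤ r₀ → ((φ ‖x‖ : ℝ) : EReal) ≤ u x)) ∧
    (∃ ψ : ℝ → ℝ,
      (∀ r, r₀ ≤ r → 0 ≤ ψ r) ∧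
      AntitoneOn ψ (Set.Ici r₀) ∧
      (∫⁻ r in Set.Ici r₀, ENNReal.ofReal (r ^ (d - 1) * ψ r)) < ⊤ ∧
      (∀ x : EuclideanSpace ℝ (Fin d), r₀ ≤ ‖x‖ → (u x).abs ≤ ENNReal.ofReal (ψ ‖x‖)))

/-- The positive part `max(a, 0)` of an extended real, as an element of `ℝ≥0∞`. -/
noncomputable def eposPart (a : EReal) : ℝ≥0∞ := (a ⊔ 0).abs

/-- The negative part `max(-a, 0)` of an extended real, as an element of `ℝ≥0∞`. -/
noncomputable def enegPart (a : EReal) : ℝ≥0∞ := (-a ⊔ 0).abs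

/-- `∫_{Λ_ℓ × Λ_ℓ} max(u(x-y), 0) ρ(x,y) d(x,y)`. -/
noncomputable def iPos {d : ℕ} (u : EuclideanSpace ℝ (Fin d) → EReal)
    (ρ : EuclideanSpace ℝ (Fin d) × EuclideanSpace ℝ (Fin d) → ℝ) (ℓ : ℝ) : ℝ≥0∞ :=
  ∫⁻ p in (lam d ℓ) ×ˢ (lam d ℓ), eposPart (u (p.1 - p.2)) * ENNReal.ofReal (ρ p)

/-- `∫_{Λ_ℓ × Λ_ℓ} max(-u(x-y), 0) ρ(x,y) d(x,y)`. -/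
noncomputable def iNeg {d : ℕ} (u : EuclideanSpace ℝ (Fin d) → EReal)
    (ρ : EuclideanSpace ℝ (Fin d) × EuclideanSpace ℝ (Fin d) → ℝ) (ℓ : ℝ) : ℝ≥0∞ :=
  ∫⁻ p in (lam d ℓ) ×ˢ (lam d ℓ), enegPart (u (p.1 - p.2)) * ENNReal.ofReal (ρ p)

/-!
By translation invariance `ρ(x, y) = ρ(x - y, 0)`, so both halves of the energy are integrals
over `Λ_ℓ × Λ_ℓ` of a function of `x - y`. Near the origin `u ≥ φ ≥ 0`, so `u⁻` lives on
`{|z| > r₀}`, where `|u| ≤ ψ(|z|)` is integrable by polar coordinates; hence the negative half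
is at most `ξ |Λ_ℓ| ∫ u⁻ < ∞`. For the same reason the divergence of `∫ u⁺(y) ρ(y, 0) dy` sits
in the ball `B(0, r₀)`, and `x - B(0, r₀) ⊆ Λ_ℓ` for every `x ∈ Λ_{ℓ - r₀}`, so the positive
half is at least `|Λ_{ℓ - r₀}| · ∞ = ∞`.
-/

open Set Metric

section SubIntegrals

variable {G : Type*} [MeasurableSpace G] [AddCommGroup G] [MeasurableAdd₂ G] [MeasurableNeg G]
  {μ : Measure G} [μ.IsAddLeftInvariant] [μ.IsNegInvariant]

theorem setLIntegral_sub_left (x : G) (f : G → ℝ≥0∞) (t : Set G) :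
    ∫⁻ y in t, f (x - y) ∂μ = ∫⁻ z in (x - ·) '' t, f z ∂μ :=
  (Measure.measurePreserving_sub_left μ x).setLIntegral_comp_emb
    (MeasurableEquiv.subLeft x).measurableEmbedding f t

theorem lintegral_prod_sub_le [SFinite μ] {f : G → ℝ≥0∞} (hf : Measurable f) (s t : Set G) :
    ∫⁻ p in s ×ˢ t, f (p.1 - p.2) ∂μ.prod μ ≤ μ s * ∫⁻ z, f z ∂μ := by
  rw [← Measure.prod_restrict, lintegral_prod _ (by fun_prop)]
  calc ∫⁻ x in s, ∫⁻ y in t, f (x - y) ∂μ ∂μ ≤ ∫⁻ _ in s, ∫⁻ z, f z ∂μ ∂μ :=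
        lintegral_mono fun x => (setLIntegral_sub_left x f t).trans_le
          (setLIntegral_le_lintegral _ _)
    _ = μ s * ∫⁻ z, f z ∂μ := by rw [setLIntegral_const, mul_comm]

theorem mul_setLIntegral_le_lintegral_prod_sub [SFinite μ] {f : G → ℝ≥0∞} (hf : Measurable f)
    {s s' t K : Set G} (hs's : s' ⊆ s) (hs' : MeasurableSet s')
    (hK : ∀ x ∈ s', ∀ z ∈ K, x - z ∈ t) :
    μ s' * ∫⁻ z in K, f z ∂μ ≤ ∫⁻ p in s ×ˢ t, f (p.1 - p.2) ∂μ.prod μ := by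
  rw [← Measure.prod_restrict, lintegral_prod _ (by fun_prop)]
  calc μ s' * ∫⁻ z in K, f z ∂μ = ∫⁻ _ in s', ∫⁻ z in K, f z ∂μ ∂μ := by
        rw [setLIntegral_const, mul_comm]
    _ ≤ ∫⁻ x in s', ∫⁻ y in t, f (x - y) ∂μ ∂μ := by
        refine setLIntegral_mono' hs' fun x hx => ?_
        rw [setLIntegral_sub_left]
        exact lintegral_mono_set fun z hz => ⟨x - z, hK x hx z hz, sub_sub_cancel x z⟩
    _ ≤ ∫⁻ x in s, ∫⁻ y in t, f (x - y) ∂μ ∂μ := lintegral_mono_set hs's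

end SubIntegrals

section RadialIntegrals

variable {E : Type*} [NormedAddCommGroup E] [NormedSpace ℝ E] [MeasurableSpace E] [BorelSpace E]
  [Nontrivial E] [FiniteDimensional ℝ E] (μ : Measure E) [μ.IsAddHaarMeasure]

theorem lintegral_fun_norm_addHaar {f : ℝ → ℝ≥0∞} (hf : Measurable f) :
    ∫⁻ x, f ‖x‖ ∂μ =
      μ.toSphere univ * ∫⁻ r in Ioi 0, ENNReal.ofReal (r ^ (Module.finrank ℝ E - 1)) * f r := by
  have hg : Measurable fun p : sphere (0 : E) 1 × Ioi (0 : ℝ) => f p.2 := by fun_prop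
  calc ∫⁻ x, f ‖x‖ ∂μ = ∫⁻ x : ({0}ᶜ : Set E), f ‖x.1‖ ∂μ.comap (↑) := by
        rw [lintegral_subtype_comap (measurableSet_singleton 0).compl fun x => f ‖x‖,
          restrict_compl_singleton]
    _ = ∫⁻ p : sphere (0 : E) 1 × Ioi (0 : ℝ), f p.2
          ∂μ.toSphere.prod (.volumeIoiPow (Module.finrank ℝ E - 1)) := by
        simpa using μ.measurePreserving_homeomorphUnitSphereProd.lintegral_comp hg
    _ = μ.toSphere univ *
          ∫⁻ r : Ioi (0 : ℝ), f r ∂.volumeIoiPow (Module.finrank ℝ E - 1) := by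
        rw [lintegral_prod _ hg.aemeasurable]
        simp [lintegral_const, mul_comm]
    _ = _ := by
        rw [Measure.volumeIoiPow, lintegral_withDensity_eq_lintegral_mul _ (by fun_prop)
          (by fun_prop), ← lintegral_subtype_comap measurableSet_Ioi]
        rfl

theorem setLIntegral_norm_gt_lt_top {ψ : ℝ → ℝ} {r₀ : ℝ} (hr₀ : 0 < r₀)
    (hψ : AntitoneOn ψ (Ici r₀))
    (hint : ∫⁻ r in Ici r₀, ENNReal.ofReal (r ^ (Module.finrank ℝ E - 1) * ψ r) < ⊤) :
    ∫⁻ x in (closedBall 0 r₀)ᶜ, ENNReal.ofReal (ψ ‖x‖) ∂μ < ⊤ := by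
  -- `ψ ∘ max · r₀` is antitone, hence measurable, and agrees with `ψ` on the tail
  set f : ℝ → ℝ≥0∞ := (Ioi r₀).indicator fun r => ENNReal.ofReal (ψ (max r r₀))
  have hf : Measurable f := by
    refine Measurable.indicator (Antitone.measurable ?_).ennreal_ofReal measurableSet_Ioi
    exact fun a b hab => hψ (le_max_right a r₀) (le_max_right b r₀) (max_le_max hab le_rfl)
  have hlhs : ∫⁻ x in (closedBall 0 r₀)ᶜ, ENNReal.ofReal (ψ ‖x‖) ∂μ = ∫⁻ x, f ‖x‖ ∂μ := by
    rw [← lintegral_indicator measurableSet_closedBall.compl]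
    congr 1; ext x
    by_cases hx : r₀ < ‖x‖
    · simp [f, hx, hx.le]
    · simp [f, hx]
  rw [hlhs, lintegral_fun_norm_addHaar μ hf]
  refine ENNReal.mul_lt_top (measure_lt_top _ _) (lt_of_le_of_lt ?_ hint)
  set n := Module.finrank ℝ E - 1
  calc ∫⁻ r in Ioi 0, ENNReal.ofReal (r ^ n) * f r
      ≤ ∫⁻ r, (Ioi r₀).indicator (fun r => ENNReal.ofReal (r ^ n * ψ r)) r := by
        refine (setLIntegral_le_lintegral _ _).trans (lintegral_mono fun r => ?_)
        by_cases hr : r₀ < r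
        · simp [f, hr, hr.le, ENNReal.ofReal_mul (pow_nonneg (hr₀.trans hr).le n)]
        · simp [f, hr]
    _ ≤ ∫⁻ r in Ici r₀, ENNReal.ofReal (r ^ n * ψ r) := by
        rw [lintegral_indicator measurableSet_Ioi]
        exact lintegral_mono_set Ioi_subset_Ici_self

end RadialIntegrals

theorem eposPart_eq_toENNReal (a : EReal) : eposPart a = a.toENNReal := by
  rcases le_total 0 a with h | h
  · rw [eposPart, sup_of_le_left h]
    induction a with
    | bot => simp at h
    | coe x => simp [EReal.abs_def, abs_of_nonneg (EReal.coe_nonneg.mp h)]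
    | top => simp
  · simp [eposPart, sup_of_le_right h, EReal.toENNReal_of_nonpos h]

@[fun_prop]
theorem measurable_eposPart : Measurable eposPart := by
  simpa only [funext eposPart_eq_toENNReal] using EReal.continuous_toENNReal.measurable

@[fun_prop]
theorem measurable_enegPart : Measurable enegPart :=
  measurable_eposPart.comp measurable_neg

theorem eposPart_le_abs (a : EReal) : eposPart a ≤ a.abs := by
  rcases le_total 0 a with h | h
  · rw [eposPart, sup_of_le_left h]
  · simp [eposPart, sup_of_le_right h]

theorem enegPart_le_abs (a : EReal) : enegPart a ≤ a.abs := by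
  rw [← EReal.abs_neg]
  exact eposPart_le_abs (-a)

theorem enegPart_of_nonneg {a : EReal} (h : 0 ≤ a) : enegPart a = 0 := by
  simp [enegPart, sup_of_le_right (EReal.neg_le_zero.mpr h)]

section Box

variable {d : ℕ}

theorem lam_eq_preimage (ℓ : ℝ) :
    lam d ℓ = WithLp.ofLp ⁻¹' univ.pi fun _ => Icc (-ℓ) ℓ := by
  ext x
  simp only [lam, mem_ofPred_eq, mem_preimage, mem_univ_pi, mem_Icc, abs_le]

theorem measurableSet_lam (ℓ : ℝ) : MeasurableSet (lam d ℓ) := by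
  rw [lam_eq_preimage]
  exact (MeasurableSet.univ_pi fun _ => measurableSet_Icc).preimage (by fun_prop)

theorem volume_lam (ℓ : ℝ) : volume (lam d ℓ) = ENNReal.ofReal (2 * ℓ) ^ d := by
  rw [lam_eq_preimage, (PiLp.volume_preserving_ofLp (Fin d)).measure_preimage
    (MeasurableSet.univ_pi fun _ => measurableSet_Icc).nullMeasurableSet, volume_pi_pi]
  simp [Real.volume_Icc, two_mul]

theorem lam_mono {ℓ ℓ' : ℝ} (h : ℓ ≤ ℓ') : lam d ℓ ⊆ lam d ℓ' := fun _ hx i => (hx i).trans h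

theorem sub_mem_lam {ℓ r : ℝ} {x z : EuclideanSpace ℝ (Fin d)} (hx : x ∈ lam d (ℓ - r))
    (hz : ‖z‖ ≤ r) : x - z ∈ lam d ℓ := fun i => by
  have hzi : |z i| ≤ ‖z‖ := by simpa using PiLp.norm_apply_le z i
  calc |(x - z) i| ≤ |x i| + |z i| := by simpa using abs_sub (x i) (z i)
    _ ≤ ℓ := by linarith [hx i]

end Box

namespace memU

variable {d : ℕ} [NeZero d] {u : EuclideanSpace ℝ (Fin d) → EReal}

theorem exists_nonneg_and_lintegral_tail_lt_top (hu : memU d u) :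
    ∃ r > 0, (∀ z, 0 < ‖z‖ → ‖z‖ ≤ r → 0 ≤ u z) ∧
      ∫⁻ z in (closedBall 0 r)ᶜ, (u z).abs < ⊤ := by
  obtain ⟨-, -, r, hr, ⟨φ, hφ0, -, -, hφu⟩, ⟨ψ, -, hψ, hint, hψu⟩⟩ := hu
  refine ⟨r, hr, fun z hz hzr => (EReal.coe_nonneg.mpr (hφ0 _ ⟨hz, hzr⟩)).trans (hφu z hz hzr),
    ?_⟩
  refine lt_of_le_of_lt (setLIntegral_mono' measurableSet_closedBall.compl fun z hz => ?_)
    (setLIntegral_norm_gt_lt_top (E := EuclideanSpace ℝ (Fin d)) volume hr hψ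
      (by simpa using hint))
  exact hψu z (le_of_lt (by simpa using hz))

theorem lintegral_enegPart_lt_top (hu : memU d u) : ∫⁻ z, enegPart (u z) < ⊤ := by
  obtain ⟨r, -, hnonneg, htail⟩ := hu.exists_nonneg_and_lintegral_tail_lt_top
  rw [← lintegral_indicator measurableSet_closedBall.compl] at htail
  refine lt_of_le_of_lt (lintegral_mono_ae ?_) htail
  filter_upwards [compl_mem_ae_iff.mpr (measure_singleton 0)] with z hz
  by_cases hzr : ‖z‖ ≤ r
  · rw [enegPart_of_nonneg (hnonneg z (norm_pos_iff.mpr hz) hzr)]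
    exact zero_le
  · rw [indicator_of_mem (by simpa using hzr)]
    exact enegPart_le_abs _

theorem exists_setLIntegral_closedBall_eq_top (hu : memU d u)
    {w : EuclideanSpace ℝ (Fin d) → ℝ≥0∞} {C : ℝ≥0∞} (hC : C ≠ ⊤) (hw : ∀ z, w z ≤ C)
    (hdiv : ∫⁻ z, eposPart (u z) * w z = ⊤) :
    ∃ r > 0, ∫⁻ z in closedBall 0 r, eposPart (u z) * w z = ⊤ := by
  obtain ⟨r, hr, -, htail⟩ := hu.exists_nonneg_and_lintegral_tail_lt_top
  refine ⟨r, hr, by_contra fun hball => ?_⟩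
  have htail' : ∫⁻ z in (closedBall 0 r)ᶜ, eposPart (u z) * w z < ⊤ :=
    calc ∫⁻ z in (closedBall 0 r)ᶜ, eposPart (u z) * w z
        ≤ ∫⁻ z in (closedBall 0 r)ᶜ, (u z).abs * C := by
          gcongr with z
          exacts [eposPart_le_abs _, hw z]
      _ < ⊤ := by
          rw [lintegral_mul_const' _ _ hC]
          exact ENNReal.mul_lt_top htail hC.lt_top
  rw [← lintegral_add_compl _ measurableSet_closedBall] at hdiv
  exact ENNReal.add_ne_top.mpr ⟨hball, htail'.ne⟩ hdiv

end memU

section PairIntegrals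

variable {d : ℕ} {u : EuclideanSpace ℝ (Fin d) → EReal}
  {ρ : EuclideanSpace ℝ (Fin d) × EuclideanSpace ℝ (Fin d) → ℝ}

theorem iNeg_lt_top (hu : Measurable u) {ξ : ℝ} (hρ : ∀ p, ρ p ≤ ξ)
    (hneg : ∫⁻ z, enegPart (u z) < ⊤) (ℓ : ℝ) : iNeg u ρ ℓ < ⊤ := by
  calc iNeg u ρ ℓ
      ≤ ∫⁻ p in lam d ℓ ×ˢ lam d ℓ, ENNReal.ofReal ξ * enegPart (u (p.1 - p.2)) := by
        refine setLIntegral_mono (by fun_prop) fun p _ => ?_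
        rw [mul_comm]
        gcongr
        exact hρ p
    _ ≤ ENNReal.ofReal ξ * (volume (lam d ℓ) * ∫⁻ z, enegPart (u z)) := by
        rw [lintegral_const_mul _ (by fun_prop), Measure.volume_eq_prod]
        gcongr
        exact lintegral_prod_sub_le (by fun_prop) _ _
    _ < ⊤ := by
        rw [volume_lam]
        exact ENNReal.mul_lt_top ENNReal.ofReal_lt_top
          (ENNReal.mul_lt_top (ENNReal.pow_lt_top ENNReal.ofReal_lt_top) hneg)

theorem iPos_eq_top (hu : Measurable u) (hρ : Measurable ρ)
    (hti : ∀ x y z : EuclideanSpace ℝ (Fin d), ρ (x + z, y + z) = ρ (x, y)) {r ℓ : ℝ}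
    (hr : 0 ≤ r) (hrℓ : r < ℓ)
    (hball : ∫⁻ z in closedBall 0 r, eposPart (u z) * ENNReal.ofReal (ρ (z, 0)) = ⊤) :
    iPos u ρ ℓ = ⊤ := by
  set F := fun z => eposPart (u z) * ENNReal.ofReal (ρ (z, 0))
  have hF : Measurable F := by fun_prop
  have hpair : iPos u ρ ℓ = ∫⁻ p in lam d ℓ ×ˢ lam d ℓ, F (p.1 - p.2) ∂volume.prod volume := by
    rw [iPos, Measure.volume_eq_prod]
    refine setLIntegral_congr_fun (measurableSet_lam ℓ |>.prod (measurableSet_lam ℓ)) fun p _ => ?_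
    simpa [F] using congrArg (fun t => eposPart (u (p.1 - p.2)) * ENNReal.ofReal t)
      (hti (p.1 - p.2) 0 p.2)
  rw [hpair, eq_top_iff]
  calc ⊤ = volume (lam d (ℓ - r)) * ∫⁻ z in closedBall 0 r, F z := by
        rw [hball, ENNReal.mul_top]
        simp [volume_lam, hrℓ]
    _ ≤ _ := mul_setLIntegral_le_lintegral_prod_sub hF (lam_mono (by linarith))
        (measurableSet_lam _) fun x hx z hz => sub_mem_lam hx (mem_closedBall_zero_iff.mp hz)

end PairIntegrals

theorem specific_energy_divergent_general {d : ℕ} (hd : 1 ≤ d)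
    (u : EuclideanSpace ℝ (Fin d) → EReal) (hu : memU d u)
    (ξ : ℝ)
    (ρ : EuclideanSpace ℝ (Fin d) × EuclideanSpace ℝ (Fin d) → ℝ)
    (hρmeas : Measurable ρ) (hρbound : ∀ p, ρ p ≤ ξ)
    (hti : ∀ x y z : EuclideanSpace ℝ (Fin d), ρ (x + z, y + z) = ρ (x, y))
    (hdiv : (∫⁻ y, eposPart (u y) * ENNReal.ofReal (ρ (y, 0))) = ⊤) :
    (∃ ℓ₀ : ℝ, ∀ ℓ : ℝ, ℓ₀ ≤ ℓ → iNeg u ρ ℓ < ⊤ ∧ iPos u ρ ℓ = ⊤) ∧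
    Tendsto (fun ℓ : ℝ =>
        (((((2 * ℓ) ^ d)⁻¹ : ℝ)) : EReal) *
          ((iPos u ρ ℓ : EReal) - (iNeg u ρ ℓ : EReal)))
      atTop (nhds (⊤ : EReal)) := by
  have : NeZero d := ⟨by omega⟩
  obtain ⟨r, hr, hball⟩ := hu.exists_setLIntegral_closedBall_eq_top ENNReal.ofReal_ne_top
    (fun z => ENNReal.ofReal_le_ofReal (hρbound (z, 0))) hdiv
  have hNeg : ∀ ℓ, iNeg u ρ ℓ < ⊤ := iNeg_lt_top hu.1 hρbound hu.lintegral_enegPart_lt_top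
  have hPos : ∀ ℓ, r < ℓ → iPos u ρ ℓ = ⊤ := fun ℓ hℓ =>
    iPos_eq_top hu.1 hρmeas hti hr.le hℓ hball
  refine ⟨⟨r + 1, fun ℓ hℓ => ⟨hNeg ℓ, hPos ℓ (by linarith)⟩⟩, tendsto_const_nhds.congr' ?_⟩
  filter_upwards [eventually_gt_atTop r] with ℓ hℓ
  have hℓ0 : 0 < ℓ := hr.trans hℓ
  rw [hPos ℓ hℓ, EReal.coe_ennreal_top, EReal.top_sub (EReal.coe_ennreal_eq_top_iff.not.mpr
    (hNeg ℓ).ne), EReal.coe_mul_top_of_pos (by positivity)]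

/-- Specific energy identity, divergent case: if `u ∈ 𝒰`, `ρ` is bounded and
translation invariant, and `∫ max(u(y),0) ρ(y,0) dy = +∞`, then for all sufficiently
large `ℓ` the extended-valued double integral over `Λ_ℓ × Λ_ℓ` equals `+∞` (its
negative part being finite), and in particular
`lim_{ℓ→∞} (1/|Λ_ℓ|) ∫_{Λ_ℓ × Λ_ℓ} u(x-y) ρ(x,y) d(x,y) = +∞`, with `|Λ_ℓ| = (2ℓ)^d`. -/
theorem specific_energy_divergent {d : ℕ} (hd : 1 ≤ d)
    (u : EuclideanSpace ℝ (Fin d) → EReal) (hu : memU d u)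
    (ξ : ℝ) (hξ : 0 < ξ)
    (ρ : EuclideanSpace ℝ (Fin d) × EuclideanSpace ℝ (Fin d) → ℝ)
    (hρmeas : Measurable ρ) (hρnonneg : ∀ p, 0 ≤ ρ p) (hρbound : ∀ p, ρ p ≤ ξ)
    (hti : ∀ x y z : EuclideanSpace ℝ (Fin d), ρ (x + z, y + z) = ρ (x, y))
    (hdiv : (∫⁻ y, eposPart (u y) * ENNReal.ofReal (ρ (y, 0))) = ⊤) :
    (∃ ℓ₀ : ℝ, ∀ ℓ : ℝ, ℓ₀ ≤ ℓ → iNeg u ρ ℓ < ⊤ ∧ iPos u ρ ℓ = ⊤) ∧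
    Tendsto (fun ℓ : ℝ =>
        (((((2 * ℓ) ^ d)⁻¹ : ℝ)) : EReal) *
          ((iPos u ρ ℓ : EReal) - (iNeg u ρ ℓ : EReal)))
      atTop (nhds (⊤ : EReal)) :=
  specific_energy_divergent_general hd u hu ξ ρ hρmeas hρbound hti hdiv
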